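/- Let Δ = star(γ) be the star of an interior vertex in ℝ² in which all interior edges have distinct slopes (f_1° = t ≥ 2), and set s = ⌊(r+1)/(t-1)⌋ + r for an integer r ≥ 0. Then every C^r spline on Δ is automatically C^s at γ; equivalently, dim S_d^r(Δ) = dim S_d^{r,s}(Δ°) for all d ≥ 0. -/

import Mathlib

open MvPolynomial
open scoped Classical

noncomputable section

/-- `ℝ[x,y]`, the polynomial ring on the plane. -/
abbrev P2 := MvPolynomial (Fin 2) ℝ

/-- Binomial coefficient `C(a,2)` with the convention `C(a,2) = 0` for `a < 2`. -/
def bin2 (a : ℤ) : ℤ := (a.toNat.choose 2 : ℤ)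

/-- The affine linear form `a(x - γ₁) + b(y - γ₂)` vanishing on the line through
`γ = (γ₁, γ₂)` with direction orthogonal to `(a,b)`. -/
def edgeForm (γ₁ γ₂ a b : ℝ) : P2 :=
  C a * (X 0 - C γ₁) + C b * (X 1 - C γ₂)

/-- The maximal ideal of polynomials vanishing at `γ = (γ₁, γ₂)`. -/
def mIdeal (γ₁ γ₂ : ℝ) : Ideal P2 :=
  Ideal.span {X 0 - C γ₁, X 1 - C γ₂}

/-- The space of splines of degree at most `d` on the star of the interior vertex
`γ = (γ₁, γ₂)` whose `n` interior edges, in cyclic order, lie on the lines through `γ` cut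
out by the affine forms `ℓ_i = a_i(x-γ₁) + b_i(y-γ₂)`, with smoothness `r` across every
interior edge and supersmoothness `s` at `γ`: tuples `(f_0,…,f_{n-1})` of polynomials of
degree at most `d` (one for each triangle) whose consecutive differences satisfy
`f_i - f_{i+1} ∈ ⟨ℓ_i^{r+1}⟩ ∩ m_γ^{s+1}` (Billera's criterion together with the vertex
supersmoothness condition). -/
def splineSpace (n : ℕ) [NeZero n] (d r s : ℕ) (γ₁ γ₂ : ℝ) (a b : Fin n → ℝ) :
    Submodule ℝ (Fin n → P2) :=
  (⨅ i : Fin n, Submodule.comap (LinearMap.proj i : (Fin n → P2) →ₗ[ℝ] P2)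
      (restrictTotalDegree (Fin 2) ℝ d))
  ⊓ ⨅ i : Fin n, Submodule.comap
      ((LinearMap.proj i : (Fin n → P2) →ₗ[ℝ] P2) - LinearMap.proj (i + 1))
      (Submodule.restrictScalars ℝ
        ((Ideal.span {edgeForm γ₁ γ₂ (a i) (b i) ^ (r + 1)}
          ⊓ (mIdeal γ₁ γ₂) ^ (s + 1) : Ideal P2) : Submodule P2 P2))

namespace Stmt16Aux

/-- the linear form `a x + b y`. -/
def lin (a b : ℝ) : P2 := C a * X 0 + C b * X 1

/-- directional derivative `b ∂ₓ - a ∂_y`. -/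
def dop (u v : ℝ) : P2 →ₗ[ℝ] P2 :=
  v • (pderiv (0 : Fin 2)).toLinearMap - u • (pderiv (1 : Fin 2)).toLinearMap

lemma dop_apply (u v : ℝ) (f : P2) :
    dop u v f = C v * pderiv 0 f - C u * pderiv 1 f := by
  simp [dop, smul_eq_C_mul]

lemma dop_mul (u v : ℝ) (f g : P2) :
    dop u v (f * g) = dop u v f * g + f * dop u v g := by
  simp only [dop_apply, pderiv_mul]; ring

lemma dop_C (u v c : ℝ) : dop u v (C c) = 0 := by
  simp [dop_apply]

lemma pderiv_lin0 (a b : ℝ) : pderiv (0:Fin 2) (lin a b) = C a := by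
  simp [lin, pderiv_X_of_ne (show (1:Fin 2) ≠ 0 by decide)]

lemma pderiv_lin1 (a b : ℝ) : pderiv (1:Fin 2) (lin a b) = C b := by
  simp [lin, pderiv_X_of_ne (show (0:Fin 2) ≠ 1 by decide)]

lemma dop_lin (u v a b : ℝ) : dop u v (lin a b) = C (a * v - b * u) := by
  rw [dop_apply, pderiv_lin0, pderiv_lin1, ← C_mul, ← C_mul, ← C_sub]
  ring_nf

lemma dop_lin_self (a b : ℝ) : dop a b (lin a b) = 0 := by
  rw [dop_lin, mul_comm a b, sub_self, map_zero]

lemma dop_comm' (i j : Fin 2) (f : P2) :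
    pderiv i (pderiv j f) = pderiv j (pderiv i f) := by
  induction f using MvPolynomial.induction_on' with
  | monomial s c =>
      rcases eq_or_ne i j with rfl | hij
      · rfl
      · simp only [pderiv_monomial]
        rw [Finsupp.tsub_apply, Finsupp.tsub_apply,
          Finsupp.single_eq_of_ne' hij, Finsupp.single_eq_of_ne' (Ne.symm hij),
          tsub_zero, tsub_zero, tsub_right_comm, mul_right_comm]
  | add p q hp hq => simp [map_add, hp, hq]

/-- any two directional derivative operators commute -/
lemma dop_comm (u v u' v' : ℝ) (f : P2) :
    dop u v (dop u' v' f) = dop u' v' (dop u v f) := by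
  simp only [dop_apply, map_sub, pderiv_C_mul, dop_comm' 0 1 f]
  ring

/-- taking a partial derivative lowers the total degree -/
lemma totalDegree_pderiv_le (i : Fin 2) (f : P2) (m : ℕ)
    (hf : f.totalDegree ≤ m + 1) : (pderiv i f).totalDegree ≤ m := by
  conv_lhs => rw [f.as_sum]
  rw [map_sum]
  refine (totalDegree_finset_sum _ _).trans (Finset.sup_le fun v hv => ?_)
  rw [pderiv_monomial]
  rcases Nat.eq_zero_or_pos (v i) with h0 | h1
  · simp [h0]
  · refine (totalDegree_monomial_le _ _).trans ?_
    have hv2 : (v.sum fun _ n => n) ≤ m + 1 := le_trans (le_totalDegree hv) hf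
    rw [Finsupp.sum_fintype _ _ (fun _ => rfl), Fin.sum_univ_two] at hv2 ⊢
    simp only [Finsupp.tsub_apply]
    have hi2 : i = 0 ∨ i = 1 := by fin_cases i <;> [left; right] <;> rfl
    rcases hi2 with rfl | rfl
    · rw [Finsupp.single_eq_same, Finsupp.single_eq_of_ne' (by decide : (0:Fin 2) ≠ 1)]
      simp only [id_eq]; omega
    · rw [Finsupp.single_eq_same, Finsupp.single_eq_of_ne' (by decide : (1:Fin 2) ≠ 0)]
      simp only [id_eq]; omega

lemma totalDegree_dop_le (u v : ℝ) (f : P2) (m : ℕ)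
    (hf : f.totalDegree ≤ m + 1) : (dop u v f).totalDegree ≤ m := by
  rw [dop_apply]
  refine (totalDegree_sub _ _).trans (max_le ?_ ?_) <;>
    refine (totalDegree_mul _ _).trans ?_ <;>
    simp only [totalDegree_C, zero_add] <;>
    exact totalDegree_pderiv_le _ _ _ hf

/-- iterated application of directional derivative operators -/
def dfold (L : List (ℝ × ℝ)) (x : P2) : P2 :=
  L.foldr (fun z q => dop z.1 z.2 q) x

lemma dfold_nil (x : P2) : dfold [] x = x := rfl

lemma dfold_cons (z : ℝ × ℝ) (L : List (ℝ × ℝ)) (x : P2) :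
    dfold (z :: L) x = dop z.1 z.2 (dfold L x) := rfl

lemma dfold_append (A B : List (ℝ × ℝ)) (x : P2) :
    dfold (A ++ B) x = dfold A (dfold B x) := List.foldr_append ..

lemma dfold_zero (L : List (ℝ × ℝ)) : dfold L 0 = 0 := by
  induction L with
  | nil => rfl
  | cons z L ih => rw [dfold_cons, ih, map_zero]

lemma dfold_sum {ι : Type*} (L : List (ℝ × ℝ)) (t : Finset ι) (f : ι → P2) :
    dfold L (∑ i ∈ t, f i) = ∑ i ∈ t, dfold L (f i) := by
  induction L with
  | nil => rfl
  | cons z L ih => rw [dfold_cons, ih, map_sum]; rfl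

instance : LeftCommutative (fun (z : ℝ × ℝ) (q : P2) => dop z.1 z.2 q) :=
  ⟨fun a b c => dop_comm a.1 a.2 b.1 b.2 c⟩

lemma dfold_perm {L₁ L₂ : List (ℝ × ℝ)} (h : L₁.Perm L₂) (x : P2) :
    dfold L₁ x = dfold L₂ x := h.foldr_eq x

/-- applying a directional derivative `deg + 1` times kills a polynomial -/
lemma dop_kill_of_degree_le (u v : ℝ) :
    ∀ (m : ℕ) (f : P2), f.totalDegree ≤ m →
      dfold (List.replicate (m+1) (u, v)) f = 0 := by
  intro m
  induction m with
  | zero =>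
      intro f hf
      have h0 := (totalDegree_eq_zero_iff _ f).mp (Nat.le_zero.mp hf)
      have hd : dop u v f = 0 := by
        have hp : ∀ i : Fin 2, pderiv i f = 0 := by
          intro i
          conv_lhs => rw [f.as_sum]
          rw [map_sum]
          refine Finset.sum_eq_zero fun v hv => ?_
          rw [pderiv_monomial, h0 v hv i]
          simp
        rw [dop_apply, hp 0, hp 1]; ring
      simpa [dfold, List.replicate] using hd
  | succ m ih =>
      intro f hf
      have : dfold (List.replicate (m+1+1) (u,v)) f
          = dfold (List.replicate (m+1) (u,v)) (dop u v f) := by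
        rw [show List.replicate (m+1+1) (u,v)
            = List.replicate (m+1) (u,v) ++ [(u,v)] from List.replicate_succ',
          dfold_append]
        rfl
      rw [this]
      exact ih _ (totalDegree_dop_le u v f m hf)

lemma dop_pow_succ (u v : ℝ) (ℓ : P2) (a : ℕ) :
    dop u v (ℓ ^ (a+1)) = ((a+1 : ℕ) : P2) * ℓ ^ a * dop u v ℓ := by
  induction a with
  | zero => simp [pow_one]
  | succ a ih =>
      rw [pow_succ ℓ (a+1), dop_mul, ih]
      push_cast
      ring

lemma dop_pow_eq_zero (u v : ℝ) (ℓ : P2) (e : ℕ) (h : dop u v ℓ = 0) :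
    dop u v (ℓ ^ e) = 0 := by
  cases e with
  | zero => simpa using dop_C u v 1
  | succ a => rw [dop_pow_succ, h, mul_zero]

lemma dfold_rep_pow_mul (u v : ℝ) (ℓ : P2) (h : dop u v ℓ = 0) (e k : ℕ) (x : P2) :
    dfold (List.replicate k (u, v)) (ℓ ^ e * x)
      = ℓ ^ e * dfold (List.replicate k (u, v)) x := by
  induction k with
  | zero => rfl
  | succ k ih =>
      rw [List.replicate_succ, dfold_cons, dfold_cons, ih, dop_mul,
        dop_pow_eq_zero u v ℓ e h, zero_mul, zero_add]

/-- the key computation: applying `N ≤ e` directional derivatives, each transversal to the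
line `ℓ = 0`, to `ℓ^e p` gives `c·ℓ^(e-N)·p` modulo `(ℓ^(e-N+1))`, with `c ≠ 0`. -/
lemma core (ℓ p : P2) :
    ∀ (L : List (ℝ × ℝ)) (e : ℕ), L.length ≤ e →
    (∀ z ∈ L, ∃ w : ℝ, w ≠ 0 ∧ dop z.1 z.2 ℓ = C w) →
    ∃ (c : ℝ) (g : P2), c ≠ 0 ∧
      dfold L (ℓ ^ e * p) = C c * (ℓ ^ (e - L.length) * p) + ℓ ^ (e - L.length + 1) * g := by
  intro L
  induction L with
  | nil =>
      intro e _ _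
      exact ⟨1, 0, one_ne_zero, by simp [dfold_nil]⟩
  | cons z L ih =>
      intro e hlen hz
      obtain ⟨w, hw, hwl⟩ := hz z List.mem_cons_self
      obtain ⟨c, g, hc, hfold⟩ := ih e (le_trans (Nat.le_succ _) (by simpa using hlen))
        (fun z' hz' => hz z' (List.mem_cons_of_mem _ hz'))
      have hlen' : L.length + 1 ≤ e := by simpa using hlen
      set t := L.length with ht
      obtain ⟨A, hA⟩ : ∃ A, e - t = A + 1 := ⟨e - (t+1), by omega⟩
      have hA2 : e - (t + 1) = A := by omega
      refine ⟨c * w * ((A+1 : ℕ) : ℝ), C c * dop z.1 z.2 p + ((A+2 : ℕ) : P2) * C w * g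
        + ℓ * dop z.1 z.2 g,
        mul_ne_zero (mul_ne_zero hc hw) (Nat.cast_ne_zero.mpr (Nat.succ_ne_zero A)), ?_⟩
      rw [dfold_cons, hfold, hA]
      rw [List.length_cons, hA2]
      rw [map_add]
      rw [show dop z.1 z.2 (C c * (ℓ ^ (A+1) * p))
            = C c * (dop z.1 z.2 (ℓ^(A+1)) * p + ℓ^(A+1) * dop z.1 z.2 p) by
          rw [dop_mul, dop_C, zero_mul, zero_add, dop_mul]]
      rw [show (A + 1 + 1) = (A+1) + 1 by ring, dop_mul, dop_pow_succ, hwl]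
      rw [dop_pow_succ, hwl]
      have hcast : C (c * w * ((A+1 : ℕ) : ℝ)) = C c * C w * ((A+1 : ℕ) : P2) := by
        rw [C_mul, C_mul, map_natCast]
      rw [hcast]
      push_cast
      ring

lemma lin_ne_zero {a b : ℝ} (h : ¬(a = 0 ∧ b = 0)) : lin a b ≠ 0 := by
  intro h0
  apply h
  constructor
  · have := congrArg (coeff (Finsupp.single (0 : Fin 2) 1)) h0
    simpa [lin, coeff_X', Finsupp.single_eq_single_iff] using this
  · have := congrArg (coeff (Finsupp.single (1 : Fin 2) 1)) h0
    simpa [lin, coeff_X', Finsupp.single_eq_single_iff] using this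

lemma lin_not_unit {a b : ℝ} : ¬ IsUnit (lin a b) := by
  intro hu
  have h2 : IsUnit (constantCoeff (lin a b)) := hu.map constantCoeff
  have h0 : constantCoeff (lin a b) = 0 := by simp [lin]
  rw [h0] at h2
  exact not_isUnit_zero h2

/-- powers of pairwise non-proportional linear forms have no low-degree syzygies -/
lemma syz {n : ℕ} (a b : Fin n → ℝ) (e m : ℕ)
    (hab : ∀ i, ¬(a i = 0 ∧ b i = 0))
    (hcross : ∀ i j : Fin n, i ≠ j → a i * b j - b i * a j ≠ 0)
    (hlen : (n - 1) * (m + 1) ≤ e)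
    (p : Fin n → P2) (hdeg : ∀ i, (p i).totalDegree ≤ m)
    (hrel : ∑ i, lin (a i) (b i) ^ e * p i = 0) (i₀ : Fin n) : p i₀ = 0 := by
  by_contra hne
  set ℓ : P2 := lin (a i₀) (b i₀) with hℓ
  have hℓ0 : ℓ ≠ 0 := lin_ne_zero (hab i₀)
  obtain ⟨cm, p', hnd, hfac⟩ := WfDvdMonoid.max_power_factor' hne (lin_not_unit)
  set js : List (Fin n) := (Finset.univ.erase i₀).toList with hjs
  set G : Fin n → List (ℝ × ℝ) := fun j => List.replicate (m+1) (a j, b j) with hG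
  set L : List (ℝ × ℝ) := js.flatMap G with hL
  have hjsmem : ∀ j, j ∈ js ↔ j ≠ i₀ := by
    intro j
    rw [hjs, Finset.mem_toList, Finset.mem_erase]
    simp
  have hLlen : L.length = (n - 1) * (m + 1) := by
    rw [hL, List.length_flatMap]
    have : List.map (fun a => (G a).length) js = List.map (fun _ => m + 1) js := by
      apply List.map_congr_left
      intro j _
      simp [hG]
    rw [this, List.map_const', List.sum_replicate, smul_eq_mul, Finset.length_toList,
      Finset.card_erase_of_mem (Finset.mem_univ _), Finset.card_univ, Fintype.card_fin]
  -- kill the other terms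
  have hkill : ∀ j : Fin n, j ≠ i₀ → dfold L (lin (a j) (b j) ^ e * p j) = 0 := by
    intro j hj
    have hjmem : j ∈ js := (hjsmem j).mpr hj
    have hperm : L.Perm ((js.erase j).flatMap G ++ G j) := by
      refine List.Perm.trans (List.Perm.flatMap_right G (List.perm_cons_erase hjmem)) ?_
      rw [List.flatMap_cons]
      exact List.perm_append_comm
    rw [dfold_perm hperm, dfold_append]
    have h1 : dfold (G j) (lin (a j) (b j) ^ e * p j) = 0 := by
      rw [hG, dfold_rep_pow_mul _ _ _ (dop_lin_self (a j) (b j)),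
        dop_kill_of_degree_le _ _ _ _ (hdeg j), mul_zero]
    rw [h1, dfold_zero]
  -- the main term
  have hmain : dfold L (ℓ ^ e * p i₀) = 0 := by
    have h0 : dfold L (∑ i, lin (a i) (b i) ^ e * p i) = 0 := by rw [hrel, dfold_zero]
    rw [dfold_sum] at h0
    rw [Finset.sum_eq_single_of_mem i₀ (Finset.mem_univ _)
      (fun j _ hj => hkill j hj)] at h0
    exact h0
  rw [hfac, show ℓ ^ e * (ℓ ^ cm * p') = ℓ ^ (e + cm) * p' by rw [pow_add]; ring] at hmain
  obtain ⟨c, g, hc, hfold⟩ := core ℓ p' L (e + cm)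
    (by rw [hLlen]; omega)
    (by
      intro z hz
      rw [hL, List.mem_flatMap] at hz
      obtain ⟨j, hjmem, hzmem⟩ := hz
      have hz2 := List.eq_of_mem_replicate (hG ▸ hzmem)
      refine ⟨a i₀ * b j - b i₀ * a j, hcross i₀ j (Ne.symm ((hjsmem j).mp hjmem)), ?_⟩
      rw [hz2, hℓ, dop_lin])
  rw [hmain] at hfold
  set K := e + cm - L.length with hK
  have hfac2 : (0 : P2) = ℓ ^ K * (C c * p' + ℓ * g) := by
    rw [hfold]; ring
  have h3 : C c * p' + ℓ * g = 0 := by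
    rcases mul_eq_zero.mp hfac2.symm with h | h
    · exact absurd h (pow_ne_zero _ hℓ0)
    · exact h
  apply hnd
  refine ⟨C c⁻¹ * (-g), ?_⟩
  have h4 : C c * p' = ℓ * (-g) := by linear_combination h3
  calc p' = C c⁻¹ * (C c * p') := by
        rw [← mul_assoc, ← C_mul, inv_mul_cancel₀ hc, C_1, one_mul]
    _ = ℓ * (C c⁻¹ * (-g)) := by rw [h4]; ring

/-- the ideal `⟨x, y⟩` at the origin -/
def J0 : Ideal P2 := Ideal.span {X 0, X 1}

lemma lin_isHomogeneous (a b : ℝ) : (lin a b).IsHomogeneous 1 := by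
  have h1 : (C a * X 0 : P2).IsHomogeneous 1 :=
    (isHomogeneous_C _ a).mul (isHomogeneous_X ℝ 0)
  have h2 : (C b * X 1 : P2).IsHomogeneous 1 :=
    (isHomogeneous_C _ b).mul (isHomogeneous_X ℝ 1)
  simpa [lin] using h1.add h2

/-- component of a product with a homogeneous polynomial -/
lemma homogeneousComponent_homog_mul (ψ : P2) (e : ℕ) (hψ : ψ.IsHomogeneous e)
    (h : P2) (D : ℕ) (he : e ≤ D) :
    homogeneousComponent D (ψ * h) = ψ * homogeneousComponent (D - e) h := by
  conv_lhs => rw [← sum_homogeneousComponent h]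
  rw [Finset.mul_sum, map_sum]
  have hterm : ∀ i : ℕ, homogeneousComponent D (ψ * homogeneousComponent i h)
      = if D - e = i then ψ * homogeneousComponent i h else 0 := by
    intro i
    have hhom : (ψ * homogeneousComponent i h).IsHomogeneous (e + i) :=
      hψ.mul (homogeneousComponent_isHomogeneous i h)
    rw [homogeneousComponent_of_mem hhom]
    congr 1
    simp only [eq_iff_iff]
    omega
  simp only [hterm]
  rw [Finset.sum_ite_eq (Finset.range (h.totalDegree + 1)) (D - e)
    (fun i => ψ * homogeneousComponent i h)]
  split_ifs with hmem
  · rfl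
  · rw [Finset.mem_range, not_lt] at hmem
    rw [homogeneousComponent_eq_zero _ _ (by omega), mul_zero]

/-- homogeneous polynomials of degree `D` lie in `J0 ^ D` -/
lemma isHomogeneous_mem_pow (p : P2) (D : ℕ) (hp : p.IsHomogeneous D) : p ∈ J0 ^ D := by
  nth_rewrite 1 [p.as_sum]
  refine Ideal.sum_mem _ fun v hv => ?_
  have hvD' := hp (mem_support_iff.mp hv)
  have hvD : v 0 + v 1 = D := by
    simpa [Finsupp.weight_apply, Finsupp.sum_fintype, Fin.sum_univ_two] using hvD'
  have : monomial v (coeff v p) = C (coeff v p) * (X 0 ^ v 0 * X 1 ^ v 1) := by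
    rw [monomial_eq]
    congr 1
    rw [Finsupp.prod_fintype _ _ (fun _ => pow_zero _), Fin.prod_univ_two]
  rw [this]
  refine Ideal.mul_mem_left _ _ ?_
  rw [← hvD, pow_add]
  exact Ideal.mul_mem_mul
    (Ideal.pow_mem_pow (Ideal.subset_span (by simp)) _)
    (Ideal.pow_mem_pow (Ideal.subset_span (by simp)) _)

lemma mem_pow_of_low_components (p : P2) (k : ℕ)
    (h : ∀ D, D < k → homogeneousComponent D p = 0) : p ∈ J0 ^ k := by
  nth_rewrite 1 [← sum_homogeneousComponent p]
  refine Ideal.sum_mem _ fun D _ => ?_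
  rcases lt_or_ge D k with hD | hD
  · rw [h D hD]; exact Ideal.zero_mem _
  · exact Ideal.pow_le_pow_right hD
      (isHomogeneous_mem_pow _ D (homogeneousComponent_isHomogeneous D p))

/-- Main lemma at the origin: in a syzygy of `(r+1)`-st powers of `n` pairwise
non-proportional linear forms, each term automatically lies in `⟨x,y⟩^(r+1+k)`
with `(n-1)k ≤ r+1`. -/
lemma K0 {n : ℕ} (a b : Fin n → ℝ) (r k : ℕ)
    (hab : ∀ i, ¬(a i = 0 ∧ b i = 0))
    (hcross : ∀ i j : Fin n, i ≠ j → a i * b j - b i * a j ≠ 0)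
    (hk : (n - 1) * k ≤ r + 1)
    (h : Fin n → P2)
    (hrel : ∑ i, lin (a i) (b i) ^ (r+1) * h i = 0) (i : Fin n) :
    lin (a i) (b i) ^ (r+1) * h i ∈ J0 ^ (r + 1 + k) := by
  have hpowhom : ∀ j, (lin (a j) (b j) ^ (r+1)).IsHomogeneous (r+1) := fun j => by
    simpa using (lin_isHomogeneous (a j) (b j)).pow (r+1)
  have hcomp : ∀ m, m < k → ∀ j, homogeneousComponent m (h j) = 0 := by
    intro m hm j
    have hrel2 : ∑ i, lin (a i) (b i) ^ (r+1) * homogeneousComponent m (h i) = 0 := by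
      have := congrArg (homogeneousComponent (m + r + 1)) hrel
      rw [map_sum, map_zero] at this
      rw [← this]
      refine Finset.sum_congr rfl fun i _ => ?_
      rw [homogeneousComponent_homog_mul _ (r+1) (hpowhom i) _ _ (by omega),
        show m + r + 1 - (r + 1) = m by omega]
    have hlen : (n - 1) * (m + 1) ≤ r + 1 :=
      le_trans (Nat.mul_le_mul_left _ hm) hk
    exact syz a b (r+1) m hab hcross hlen _
      (fun i => (homogeneousComponent_isHomogeneous m (h i)).totalDegree_le) hrel2 j
  have hh : h i ∈ J0 ^ k := mem_pow_of_low_components _ _ (fun D hD => hcomp D hD i)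
  have hl : lin (a i) (b i) ^ (r+1) ∈ J0 ^ (r+1) := by
    refine Ideal.pow_mem_pow ?_ _
    rw [lin]
    exact Ideal.add_mem _ (Ideal.mul_mem_left _ _ (Ideal.subset_span (by simp)))
      (Ideal.mul_mem_left _ _ (Ideal.subset_span (by simp)))
  rw [pow_add]
  exact Ideal.mul_mem_mul hl hh

/-- the coordinate shift `x ↦ x + γ` -/
def shiftHom (γ₁ γ₂ : ℝ) : P2 →ₐ[ℝ] P2 := aeval ![X 0 + C γ₁, X 1 + C γ₂]

lemma shiftHom_X0 (γ₁ γ₂ : ℝ) : shiftHom γ₁ γ₂ (X 0) = X 0 + C γ₁ := by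
  simp [shiftHom]

lemma shiftHom_X1 (γ₁ γ₂ : ℝ) : shiftHom γ₁ γ₂ (X 1) = X 1 + C γ₂ := by
  simp [shiftHom]

lemma shiftHom_inv (γ₁ γ₂ : ℝ) (f : P2) :
    shiftHom (-γ₁) (-γ₂) (shiftHom γ₁ γ₂ f) = f := by
  have hcomp : (shiftHom (-γ₁) (-γ₂)).comp (shiftHom γ₁ γ₂) = AlgHom.id ℝ P2 := by
    apply MvPolynomial.algHom_ext
    intro i
    fin_cases i <;>
      simp [shiftHom, map_neg]
  calc shiftHom (-γ₁) (-γ₂) (shiftHom γ₁ γ₂ f)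
      = ((shiftHom (-γ₁) (-γ₂)).comp (shiftHom γ₁ γ₂)) f := rfl
    _ = f := by rw [hcomp]; rfl

lemma shiftHom_edge (γ₁ γ₂ a b : ℝ) :
    shiftHom γ₁ γ₂ (edgeForm γ₁ γ₂ a b) = lin a b := by
  simp only [edgeForm, lin, map_add, map_mul, map_sub, shiftHom_X0, shiftHom_X1]
  rw [show (shiftHom γ₁ γ₂) (C a) = C a from aeval_C _ _,
    show (shiftHom γ₁ γ₂) (C b) = C b from aeval_C _ _,
    show (shiftHom γ₁ γ₂) (C γ₁) = C γ₁ from aeval_C _ _,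
    show (shiftHom γ₁ γ₂) (C γ₂) = C γ₂ from aeval_C _ _]
  ring

lemma shift_back (γ₁ γ₂ : ℝ) (t : ℕ) (g : P2) (hg : g ∈ J0 ^ t) :
    shiftHom (-γ₁) (-γ₂) g ∈ (mIdeal γ₁ γ₂) ^ t := by
  have hmap : Ideal.map (shiftHom (-γ₁) (-γ₂)) J0 = mIdeal γ₁ γ₂ := by
    rw [J0, Ideal.map_span, mIdeal]
    congr 1
    rw [Set.image_insert_eq, Set.image_singleton, shiftHom_X0, shiftHom_X1]
    rw [map_neg, map_neg]
    norm_num [sub_eq_add_neg]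
  have h2 : shiftHom (-γ₁) (-γ₂) g ∈ Ideal.map (shiftHom (-γ₁) (-γ₂)) (J0 ^ t) :=
    Ideal.mem_map_of_mem _ hg
  rwa [Ideal.map_pow, hmap] at h2

lemma vec_ne (a b : ℝ) (h : (![a, b] : Fin 2 → ℝ) ≠ 0) : ¬(a = 0 ∧ b = 0) := by
  rintro ⟨rfl, rfl⟩
  apply h
  funext x
  fin_cases x <;> rfl

lemma cross_ne {n : ℕ} (a b : Fin n → ℝ)
    (hab : ∀ i, (![a i, b i] : Fin 2 → ℝ) ≠ 0)
    (hdist : Function.Injective fun i : Fin n =>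
      Projectivization.mk ℝ ![a i, b i] (hab i)) :
    ∀ i j : Fin n, i ≠ j → a i * b j - b i * a j ≠ 0 := by
  intro i j hij hc
  apply hij
  apply hdist
  simp only
  rw [Projectivization.mk_eq_mk_iff']
  have hcc : a i * b j = b i * a j := by linarith
  rcases eq_or_ne (a j) 0 with haj | haj
  · have hbj : b j ≠ 0 := fun hbj => vec_ne _ _ (hab j) ⟨haj, hbj⟩
    have hai : a i = 0 := by
      have : a i * b j = 0 := by rw [hcc, haj, mul_zero]
      exact (mul_eq_zero.mp this).resolve_right hbj
    refine ⟨b i / b j, ?_⟩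
    funext x
    fin_cases x <;>
      simp [Pi.smul_apply, smul_eq_mul, haj, hai, div_mul_cancel₀ _ hbj]
  · refine ⟨a i / a j, ?_⟩
    funext x
    fin_cases x <;> simp [Pi.smul_apply, smul_eq_mul]
    · rw [div_mul_cancel₀ _ haj]
    · field_simp
      linarith

lemma mem_splineSpace {n : ℕ} [NeZero n] {d r s : ℕ} {γ₁ γ₂ : ℝ} {a b : Fin n → ℝ}
    {f : Fin n → P2} :
    f ∈ splineSpace n d r s γ₁ γ₂ a b ↔
      (∀ i, f i ∈ restrictTotalDegree (Fin 2) ℝ d) ∧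
      ∀ i : Fin n, f i - f (i+1) ∈
        (Ideal.span {edgeForm γ₁ γ₂ (a i) (b i) ^ (r + 1)}
          ⊓ (mIdeal γ₁ γ₂) ^ (s+1) : Ideal P2) := by
  simp only [splineSpace, Submodule.mem_inf, Submodule.mem_iInf, Submodule.mem_comap,
    LinearMap.sub_apply, LinearMap.proj_apply, Submodule.restrictScalars_mem]

end Stmt16Aux

open Stmt16Aux in
/-- Sorokina's intrinsic supersmoothness theorem on generic vertex stars: if all `n ≥ 3`
interior edges of the star of the interior vertex `γ` have distinct slopes and
`s = ⌊(r+1)/(t-1)⌋ + r` with `t = n`, then every `C^r` spline on the star is automatically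
`C^s` at `γ`; equivalently the spline space and the superspline space coincide (in
particular their dimensions agree) in every degree `d ≥ 0`. -/
theorem stmt16 (n r : ℕ) [NeZero n] (hn : 3 ≤ n)
    (γ₁ γ₂ : ℝ) (a b : Fin n → ℝ)
    (hab : ∀ i, (![a i, b i] : Fin 2 → ℝ) ≠ 0)
    (hdistinct : Function.Injective fun i : Fin n =>
      Projectivization.mk ℝ ![a i, b i] (hab i))
    (s : ℕ) (hs : s = (r + 1) / (n - 1) + r) :
    ∀ d : ℕ, splineSpace n d r r γ₁ γ₂ a b = splineSpace n d r s γ₁ γ₂ a b := by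
  intro d
  have hab' : ∀ i, ¬(a i = 0 ∧ b i = 0) := fun i => vec_ne _ _ (hab i)
  have hcross := cross_ne a b hab hdistinct
  obtain ⟨k, hkeq⟩ : ∃ k, k = (r + 1) / (n - 1) := ⟨_, rfl⟩
  rw [← hkeq] at hs
  have hk : (n - 1) * k ≤ r + 1 := by rw [hkeq]; exact Nat.mul_div_le (r + 1) (n - 1)
  have hs1 : s + 1 = r + 1 + k := by omega
  apply le_antisymm
  · -- every `C^r` spline is automatically `C^s` at the vertex
    intro f hf
    rw [mem_splineSpace] at hf ⊢
    obtain ⟨hdeg, hsm⟩ := hf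
    have hspan : ∀ j, f j - f (j+1) ∈
        Ideal.span {edgeForm γ₁ γ₂ (a j) (b j) ^ (r+1)} := fun j => (hsm j).1
    choose h hh using fun j => Ideal.mem_span_singleton'.mp (hspan j)
    set σf := shiftHom γ₁ γ₂ with hσ
    have htele : ∑ j : Fin n, (f j - f (j+1)) = 0 := by
      rw [Finset.sum_sub_distrib,
        show ∑ j : Fin n, f (j+1) = ∑ j : Fin n, f j from
          Fintype.sum_equiv (Equiv.addRight 1) _ _ (fun j => rfl),
        sub_self]
    have hrel : ∑ j, lin (a j) (b j) ^ (r+1) * σf (h j) = 0 := by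
      have hterm : ∀ j, lin (a j) (b j) ^ (r+1) * σf (h j) = σf (f j - f (j+1)) := by
        intro j
        rw [← hh j, map_mul, map_pow, shiftHom_edge]
        ring
      simp only [hterm]
      rw [← map_sum, htele, map_zero]
    refine ⟨hdeg, fun i => ?_⟩
    have hK := K0 a b r k hab' hcross hk (fun j => σf (h j)) hrel i
    have h2 : σf (f i - f (i+1)) = lin (a i) (b i) ^ (r+1) * σf (h i) := by
      rw [← hh i, map_mul, map_pow, shiftHom_edge]
      ring
    have hmem : f i - f (i+1) ∈ (mIdeal γ₁ γ₂) ^ (s+1) := by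
      rw [hs1]
      have h4 := shift_back γ₁ γ₂ (r+1+k) _ hK
      rwa [← h2, shiftHom_inv] at h4
    exact Submodule.mem_inf.mpr ⟨hspan i, hmem⟩
  · -- supersplines are splines
    intro f hf
    rw [mem_splineSpace] at hf ⊢
    exact ⟨hf.1, fun i => ⟨(hf.2 i).1,
      Ideal.pow_le_pow_right (by omega) ((hf.2 i).2)⟩⟩
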